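/- Let k ≥ 1 be an integer and let (eₙ) be the unit vector basis of c₀. For every n and all scalars a₁,…,aₙ, the projective seminorm of ∑_{i=1}^n aᵢ · eᵢ^{⊗k} in the k-fold algebraic tensor product ⊗^k c₀ equals max_{1≤i≤n} |aᵢ| = ‖∑_{i=1}^n aᵢ eᵢ‖. In particular, the sequence (eₙ^{⊗k}) in ⊗^k c₀ is equivalent to the unit vector basis of c₀. -/

import Mathlib

/-!
The lower bound `maxᵢ |aᵢ| ≤ π(∑ aᵢ eᵢ^{⊗k})` comes from testing against the norm-one functional
`x₁ ⊗ ⋯ ⊗ xₖ ↦ x₁(i) ⋯ xₖ(i)`. For the upper bound, average over independent sign vectors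
`ε₁, …, εₖ₋₁ ∈ {±1}ⁿ`: expanding the elementary tensor
`(∑ᵢ aᵢ ε₁ᵢ ⋯ εₖ₋₁ᵢ eᵢ) ⊗ (∑ᵢ ε₁ᵢ eᵢ) ⊗ ⋯ ⊗ (∑ᵢ εₖ₋₁ᵢ eᵢ)`, the orthogonality of the signs kills
every non-diagonal term, so `∑ aᵢ eᵢ^{⊗k}` is an average of elementary tensors, each of projective
norm at most `‖∑ᵢ ±aᵢ eᵢ‖ · ‖∑ᵢ ±eᵢ‖ᵏ⁻¹ ≤ maxᵢ |aᵢ|`.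
-/

open Filter Topology Metric

noncomputable section

/-- The Banach space `c₀` of real sequences converging to zero, with the sup norm. -/
abbrev c0 : Type := ZeroAtInftyContinuousMap ℕ ℝ

/-- The unit vector basis of `c₀`. -/
def e (n : ℕ) : c0 :=
  { toFun := fun i => if i = n then (1 : ℝ) else 0
    continuous_toFun := continuous_of_discreteTopology
    zero_at_infty' := by
      rw [Filter.cocompact_eq_cofinite]
      refine tendsto_const_nhds.congr' ?_
      have h : {n}ᶜ ∈ (Filter.cofinite : Filter ℕ) := by simp [Filter.cofinite]
      filter_upwards [h] with i hi
      simp only [Set.mem_compl_iff, Set.mem_singleton_iff] at hi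
      simp [hi] }

/-- A series `∑ xₙ` is weakly unconditionally Cauchy (w.u.C.) if `∑ |φ (xₙ)| < ∞` for every
continuous linear functional `φ`. -/
def WUC {X : Type*} [NormedAddCommGroup X] [NormedSpace ℝ X] (x : ℕ → X) : Prop :=
  ∀ φ : X →L[ℝ] ℝ, Summable fun n => |φ (x n)|

/-- A sequence is equivalent to the unit vector basis of `c₀`: there are `0 < c ≤ C` with
`c · maxᵢ |aᵢ| ≤ ‖∑ aᵢ xᵢ‖ ≤ C · maxᵢ |aᵢ|` for all finite scalar families. -/
def IsEquivC0Basis {X : Type*} [NormedAddCommGroup X] [NormedSpace ℝ X] (x : ℕ → X) : Prop :=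
  ∃ c C : ℝ, 0 < c ∧ c ≤ C ∧ ∀ (n : ℕ) (a : ℕ → ℝ),
    c * (⨆ i : Fin n, |a i|) ≤ ‖∑ i ∈ Finset.range n, a i • x i‖ ∧
    ‖∑ i ∈ Finset.range n, a i • x i‖ ≤ C * (⨆ i : Fin n, |a i|)

/-- A map (polynomial) is unconditionally converging if for every w.u.C. series `∑ xₙ` the
sequence of values at the partial sums converges in norm. -/
def UCPoly {X Y : Type*} [NormedAddCommGroup X] [NormedSpace ℝ X]
    [NormedAddCommGroup Y] [NormedSpace ℝ Y] (P : X → Y) : Prop :=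
  ∀ x : ℕ → X, WUC x →
    ∃ L : Y, Tendsto (fun n => P (∑ i ∈ Finset.range n, x i)) atTop (𝓝 L)

/-- An operator is unconditionally converging if it maps w.u.C. series to unconditionally
convergent series. -/
def UCOp {X Y : Type*} [NormedAddCommGroup X] [NormedSpace ℝ X]
    [NormedAddCommGroup Y] [NormedSpace ℝ Y] (T : X → Y) : Prop :=
  ∀ x : ℕ → X, WUC x → Summable fun n => T (x n)

/-- A map (polynomial or operator) is compact if the image of the closed unit ball is
relatively norm compact. -/
def CompactMap {X Y : Type*} [NormedAddCommGroup X] [NormedSpace ℝ X]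
    [NormedAddCommGroup Y] [NormedSpace ℝ Y] (P : X → Y) : Prop :=
  IsCompact (closure (P '' Metric.closedBall 0 1))

/-- A set is relatively weakly compact if its closure in the weak topology is compact. -/
def RelWeakCompact {Y : Type*} [NormedAddCommGroup Y] [NormedSpace ℝ Y] (s : Set Y) : Prop :=
  IsCompact (closure ((toWeakSpace ℝ Y) '' s))

/-- A WUC-set is the image of the closed unit ball of `c₀` under a bounded operator. -/
def IsWUCSet {X : Type*} [NormedAddCommGroup X] [NormedSpace ℝ X] (s : Set X) : Prop :=
  ∃ T : c0 →L[ℝ] X, s = ⇑T '' Metric.closedBall 0 1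

open scoped TensorProduct

open PiTensorProduct

lemma tprod_sum_smul {R : Type*} [CommSemiring R] {M : Type*} [AddCommMonoid M] [Module R M]
    {ι κ : Type*} [Fintype ι] [Fintype κ] [DecidableEq κ] (c : κ → ι → R) (x : ι → M) :
    tprod R (fun j => ∑ i, c j i • x i) =
      ∑ f : κ → ι, (∏ j, c j (f j)) • tprod R (fun j => x (f j)) := by
  rw [MultilinearMap.map_sum]
  exact Finset.sum_congr rfl fun f _ => MultilinearMap.map_smul_univ _ _ _

section SignAveraging

variable {ι : Type*} [Fintype ι]

def boolSign (b : Bool) : ℝ := if b then 1 else -1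

lemma abs_boolSign (b : Bool) : |boolSign b| = 1 := by cases b <;> simp [boolSign]

lemma sum_boolSign_mul_boolSign [DecidableEq ι] (p q : ι) :
    ∑ b : ι → Bool, boolSign (b p) * boolSign (b q) =
      if p = q then 2 ^ Fintype.card ι else 0 := by
  split_ifs with hpq
  · subst hpq
    simp [← sq, boolSign, apply_ite (· ^ 2)]
  · -- flipping the sign at `p` changes the sign of every summand
    have hflip : Function.Involutive fun b : ι → Bool => Function.update b p !(b p) :=
      fun b => by simp
    have hsum := Fintype.sum_equiv hflip.toPerm (fun b => boolSign (b p) * boolSign (b q))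
      (fun b => -(boolSign (b p) * boolSign (b q))) fun b => by
        cases hp : b p <;> cases hq : b q <;>
          simp [Function.update_of_ne (Ne.symm hpq), boolSign, hp, hq]
    rw [Finset.sum_neg_distrib] at hsum
    linarith

variable {E : Type*} [AddCommMonoid E] [Module ℝ E]

def signedCoeff {k : ℕ} (a : ι → ℝ) (ε : Fin k → ι → Bool) : Fin (k + 1) → ι → ℝ :=
  Fin.cons (fun i => a i * ∏ l, boolSign (ε l i)) fun l i => boolSign (ε l i)

lemma sum_prod_signedCoeff [DecidableEq ι] {k : ℕ} (a : ι → ℝ) (f : Fin (k + 1) → ι) :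
    ∑ ε : Fin k → ι → Bool, ∏ j, signedCoeff a ε j (f j) =
      a (f 0) * ∏ l : Fin k, if f l.succ = f 0 then 2 ^ Fintype.card ι else 0 := by
  simp only [Fin.prod_univ_succ, signedCoeff, Fin.cons_zero, Fin.cons_succ, mul_assoc,
    ← Finset.prod_mul_distrib, ← Finset.mul_sum]
  rw [← Fintype.prod_sum fun (l : Fin k) (b : ι → Bool) =>
    boolSign (b (f 0)) * boolSign (b (f l.succ))]
  simp only [sum_boolSign_mul_boolSign, eq_comm]

lemma sum_tprod_signedCoeff [DecidableEq ι] {k : ℕ} (a : ι → ℝ) (x : ι → E) :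
    ∑ ε : Fin k → ι → Bool, tprod ℝ (fun j => ∑ i, signedCoeff a ε j i • x i) =
      ((2 : ℝ) ^ Fintype.card ι) ^ k • ∑ i, a i • tprod ℝ (fun _ : Fin (k + 1) => x i) := by
  simp only [tprod_sum_smul]
  rw [Finset.sum_comm]
  simp only [← Finset.sum_smul, sum_prod_signedCoeff]
  rw [Finset.smul_sum, eq_comm]
  -- only the constant index maps `f` survive the averaging
  refine Fintype.sum_of_injective (fun i _ => i) Function.const_injective _ _ ?_ fun i => ?_
  · intro f hf
    obtain ⟨l, hl⟩ : ∃ l : Fin k, f l.succ ≠ f 0 := by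
      by_contra! hconst
      exact hf ⟨f 0, funext fun j => Fin.cases rfl (fun l => (hconst l).symm) j⟩
    rw [Finset.prod_eq_zero (Finset.mem_univ l) (if_neg hl), mul_zero, zero_smul]
  · simp only [if_true, Finset.prod_const, Finset.card_univ, Fintype.card_fin, smul_smul, mul_comm]

end SignAveraging

section Norms

variable {ι : Type*} [Fintype ι] {E : Type*} [SeminormedAddCommGroup E] [NormedSpace ℝ E]

lemma norm_mul_prod_boolSign_le {k : ℕ} (a : ι → ℝ) (ε : Fin k → ι → Bool) :
    ‖fun i => a i * ∏ l, boolSign (ε l i)‖ ≤ ‖a‖ :=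
  (pi_norm_le_iff_of_nonneg (norm_nonneg a)).2 fun i => by
    simpa [Finset.abs_prod, abs_boolSign] using norm_le_pi_norm a i

lemma norm_boolSign_le_one (b : ι → Bool) : ‖fun i => boolSign (b i)‖ ≤ 1 :=
  (pi_norm_le_iff_of_nonneg zero_le_one).2 fun i => (abs_boolSign (b i)).le

theorem norm_sum_smul_tprod_const_le (x : ι → E) {C : ℝ} (hC : 0 ≤ C)
    (hx : ∀ c : ι → ℝ, ‖∑ i, c i • x i‖ ≤ C * ‖c‖) (k : ℕ) (a : ι → ℝ) :
    ‖∑ i, a i • tprod ℝ (fun _ : Fin (k + 1) => x i)‖ ≤ C ^ (k + 1) * ‖a‖ := by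
  classical
  set N : ℝ := (2 ^ Fintype.card ι) ^ k
  have hN : 0 < N := by positivity
  have hfactor (ε : Fin k → ι → Bool) :
      ‖tprod ℝ (fun j => ∑ i, signedCoeff a ε j i • x i)‖ ≤ C ^ (k + 1) * ‖a‖ :=
    calc ‖tprod ℝ (fun j => ∑ i, signedCoeff a ε j i • x i)‖
        ≤ ∏ j, ‖∑ i, signedCoeff a ε j i • x i‖ := projectiveSeminorm_tprod_le _
      _ = ‖∑ i, (a i * ∏ l, boolSign (ε l i)) • x i‖ *
            ∏ l, ‖∑ i, boolSign (ε l i) • x i‖ := by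
          simp [Fin.prod_univ_succ, signedCoeff]
      _ ≤ (C * ‖a‖) * ∏ _l : Fin k, C := by
          gcongr with l
          · exact (hx _).trans (by gcongr; exact norm_mul_prod_boolSign_le a ε)
          · exact (hx _).trans (mul_le_of_le_one_right hC (norm_boolSign_le_one _))
      _ = C ^ (k + 1) * ‖a‖ := by
          rw [Finset.prod_const, Finset.card_univ, Fintype.card_fin]
          ring
  have hcard : (Fintype.card (Fin k → ι → Bool) : ℝ) = N := by simp [N]
  refine le_of_mul_le_mul_left ?_ hN
  calc N * ‖∑ i, a i • tprod ℝ (fun _ : Fin (k + 1) => x i)‖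
      = ‖∑ ε : Fin k → ι → Bool, tprod ℝ (fun j => ∑ i, signedCoeff a ε j i • x i)‖ := by
        rw [sum_tprod_signedCoeff, norm_smul, Real.norm_of_nonneg hN.le]
    _ ≤ ∑ ε : Fin k → ι → Bool, ‖tprod ℝ (fun j => ∑ i, signedCoeff a ε j i • x i)‖ :=
        norm_sum_le _ _
    _ ≤ N * (C ^ (k + 1) * ‖a‖) := by
        refine (Finset.sum_le_sum fun ε _ => hfactor ε).trans_eq ?_
        rw [Finset.sum_const, Finset.card_univ, nsmul_eq_mul, hcard]

end Norms

theorem norm_sum_mul_apply_pow_le {𝕜 : Type*} [NontriviallyNormedField 𝕜] {ι : Type*} [Fintype ι]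
    {E : Type*} [SeminormedAddCommGroup E] [NormedSpace 𝕜 E] (φ : E →L[𝕜] 𝕜) (x : ι → E)
    (a : ι → 𝕜) (k : ℕ) :
    ‖∑ i, a i * φ (x i) ^ k‖ ≤ ‖φ‖ ^ k * ‖∑ i, a i • tprod 𝕜 (fun _ : Fin k => x i)‖ := by
  set P := (ContinuousMultilinearMap.mkPiAlgebra 𝕜 (Fin k) 𝕜).compContinuousLinearMap
    fun _ => φ
  have hP : ‖P‖ ≤ ‖φ‖ ^ k := by
    simpa using ContinuousMultilinearMap.norm_compContinuousLinearMap_le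
      (ContinuousMultilinearMap.mkPiAlgebra 𝕜 (Fin k) 𝕜) fun _ => φ
  have hlift : lift P.toMultilinearMap (∑ i, a i • tprod 𝕜 fun _ : Fin k => x i) =
      ∑ i, a i * φ (x i) ^ k := by
    simp [P]
  calc ‖∑ i, a i * φ (x i) ^ k‖ ≤ ‖P‖ * ‖∑ i, a i • tprod 𝕜 (fun _ : Fin k => x i)‖ :=
        hlift ▸ norm_eval_le_projectiveSeminorm P _
    _ ≤ ‖φ‖ ^ k * ‖∑ i, a i • tprod 𝕜 (fun _ : Fin k => x i)‖ := by gcongr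

namespace ZeroAtInftyContinuousMap

open scoped ZeroAtInfty

variable {α : Type*} [TopologicalSpace α] {β : Type*} [SeminormedAddCommGroup β]

lemma norm_apply_le_norm (f : C₀(α, β)) (x : α) : ‖f x‖ ≤ ‖f‖ :=
  norm_toBCF_eq_norm (f := f) ▸ f.toBCF.norm_coe_le_norm x

variable (𝕜 : Type*) [NontriviallyNormedField 𝕜] [NormedSpace 𝕜 β]

def evalCLM (x : α) : C₀(α, β) →L[𝕜] β :=
  LinearMap.mkContinuous
    { toFun := fun f => f x, map_add' := fun _ _ => rfl, map_smul' := fun _ _ => rfl } 1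
    fun f => by simpa using norm_apply_le_norm f x

@[simp]
lemma evalCLM_apply (x : α) (f : C₀(α, β)) : evalCLM 𝕜 x f = f x := rfl

lemma norm_evalCLM_le (x : α) : ‖(evalCLM 𝕜 x : C₀(α, β) →L[𝕜] β)‖ ≤ 1 :=
  LinearMap.mkContinuous_norm_le _ zero_le_one _

end ZeroAtInftyContinuousMap

lemma e_apply (n m : ℕ) : e n m = if m = n then 1 else 0 := rfl

lemma sum_smul_e_apply {n : ℕ} (c : Fin n → ℝ) (m : ℕ) :
    (∑ i : Fin n, c i • e i) m = if h : m < n then c ⟨m, h⟩ else 0 := by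
  rw [← ZeroAtInftyContinuousMap.evalCLM_apply ℝ, map_sum]
  simp only [map_smul, ZeroAtInftyContinuousMap.evalCLM_apply, e_apply, smul_eq_mul, mul_ite,
    mul_one, mul_zero]
  split_ifs with h
  · rw [Finset.sum_eq_single_of_mem (⟨m, h⟩ : Fin n) (Finset.mem_univ _) fun i _ hi =>
      if_neg fun him => hi (Fin.ext him.symm)]
    exact if_pos rfl
  · exact Finset.sum_eq_zero fun i _ => if_neg fun (him : m = i) => h (him ▸ i.2)

lemma norm_sum_smul_e {n : ℕ} (c : Fin n → ℝ) : ‖∑ i : Fin n, c i • e i‖ = ‖c‖ := by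
  refine le_antisymm ?_ ((pi_norm_le_iff_of_nonneg (norm_nonneg _)).2 fun i => ?_)
  · rw [← ZeroAtInftyContinuousMap.norm_toBCF_eq_norm,
      BoundedContinuousFunction.norm_le (norm_nonneg c)]
    intro m
    change ‖(∑ i : Fin n, c i • e i) m‖ ≤ ‖c‖
    rw [sum_smul_e_apply]
    split_ifs
    · exact norm_le_pi_norm c _
    · simp
  · simpa [sum_smul_e_apply] using
      ZeroAtInftyContinuousMap.norm_apply_le_norm (∑ i : Fin n, c i • e i) i

lemma norm_sum_smul_tprod_e {n : ℕ} (k : ℕ) (c : Fin n → ℝ) :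
    ‖∑ i : Fin n, c i • tprod ℝ (fun _ : Fin (k + 1) => e i)‖ = ‖c‖ := by
  refine le_antisymm ?_ ((pi_norm_le_iff_of_nonneg (by positivity)).2 fun i => ?_)
  · simpa using norm_sum_smul_tprod_const_le (fun i : Fin n => e i) zero_le_one
      (fun c => (norm_sum_smul_e c).trans_le (one_mul _).ge) k c
  set φ : c0 →L[ℝ] ℝ := ZeroAtInftyContinuousMap.evalCLM ℝ (i : ℕ)
  have hcoord : ∑ j, c j * φ (e j) ^ (k + 1) = c i := by
    simp [φ, e_apply, Fin.val_inj]
  calc ‖c i‖ ≤ ‖φ‖ ^ (k + 1) * ‖∑ j, c j • tprod ℝ (fun _ : Fin (k + 1) => e j)‖ :=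
        hcoord ▸ norm_sum_mul_apply_pow_le φ (fun j : Fin n => e j) c (k + 1)
    _ ≤ ‖∑ j, c j • tprod ℝ (fun _ : Fin (k + 1) => e j)‖ :=
        mul_le_of_le_one_left (by positivity)
          (pow_le_one₀ (norm_nonneg φ) (ZeroAtInftyContinuousMap.norm_evalCLM_le ℝ _))

lemma pi_norm_eq_iSup_abs {ι : Type*} [Fintype ι] (c : ι → ℝ) : ‖c‖ = ⨆ i, |c i| := by
  refine le_antisymm ((pi_norm_le_iff_of_nonneg (Real.iSup_nonneg fun i => abs_nonneg _)).2
    fun i => le_ciSup (f := fun i => |c i|) (Set.finite_range _).bddAbove i) ?_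
  exact Real.iSup_le (fun i => norm_le_pi_norm c i) (norm_nonneg c)

open PiTensorProduct in
/-- The diagonal tensors `eₙ ⊗ ⋯ ⊗ eₙ` of the unit vector basis of `c₀` span isometric copies
of the finite-dimensional pieces of `c₀`; in particular `(eₙ^{⊗k})` is equivalent to the
`c₀`-basis for the projective seminorm. -/
theorem projectiveSeminorm_basis_diagonal_tensors (k : ℕ) (hk : 1 ≤ k) :
    (∀ (n : ℕ) (a : ℕ → ℝ),
      projectiveSeminorm (∑ i ∈ Finset.range n, a i • tprod ℝ (fun _ : Fin k => e i)) =
        ‖∑ i ∈ Finset.range n, a i • e i‖ ∧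
      ‖∑ i ∈ Finset.range n, a i • e i‖ = ⨆ i : Fin n, |a i|) ∧
    (∃ c C : ℝ, 0 < c ∧ c ≤ C ∧ ∀ (n : ℕ) (a : ℕ → ℝ),
      c * (⨆ i : Fin n, |a i|) ≤
        projectiveSeminorm (∑ i ∈ Finset.range n, a i • tprod ℝ (fun _ : Fin k => e i)) ∧
      projectiveSeminorm (∑ i ∈ Finset.range n, a i • tprod ℝ (fun _ : Fin k => e i)) ≤
        C * (⨆ i : Fin n, |a i|)) := by
  obtain ⟨k, rfl⟩ : ∃ m, k = m + 1 := ⟨k - 1, by omega⟩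
  have hdiag (n : ℕ) (a : ℕ → ℝ) :
      projectiveSeminorm (∑ i ∈ Finset.range n, a i • tprod ℝ (fun _ : Fin (k + 1) => e i)) =
        ⨆ i : Fin n, |a i| := by
    rw [Finset.sum_range, ← pi_norm_eq_iSup_abs]
    exact norm_sum_smul_tprod_e k fun i : Fin n => a i
  have hbasis (n : ℕ) (a : ℕ → ℝ) : ‖∑ i ∈ Finset.range n, a i • e i‖ = ⨆ i : Fin n, |a i| := by
    rw [Finset.sum_range, ← pi_norm_eq_iSup_abs]
    exact norm_sum_smul_e fun i : Fin n => a i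
  refine ⟨fun n a => ⟨(hdiag n a).trans (hbasis n a).symm, hbasis n a⟩,
    1, 1, one_pos, le_rfl, fun n a => ?_⟩
  rw [hdiag, one_mul]
  exact ⟨le_rfl, le_rfl⟩
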